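/- Let g1 be an element of Thompson's group V with N(g1) ≥ 4 such that the word 0 is a strict prefix of the range code of some branch of g1. Let M be a positive integer, let n = M·N(g1), and consider the word w2 = x0^{−n}·x1·x0^{n} in the letters x0^{±1}, x1^{±1}. Then: (1) for every prefix w' of w2 (evaluated as an element of V) one has N(g1·w') ≥ N(g1); (2) N(g1·w2) ≥ M·N(g1). -/
import Mathlib


/-!
Formalization framework for Thompson's groups `F ≤ T ≤ V` acting on the
Cantor set `{0,1}^ℕ`.  Elements of `V` are permutations of the Cantor set
admitting a finite table of branches `u → v` (complete prefix codes) with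
`g(uω) = vω`.  Products in the paper are composed left-to-right, i.e. the
paper's `g·h` is `Equiv.trans g h` (equivalently `h * g` in `Equiv.Perm`).
-/

abbrev CSeq : Type := ℕ → Bool
abbrev VPerm : Type := Equiv.Perm CSeq

/-- Concatenation of a finite binary word with an infinite binary word. -/
def app (u : List Bool) (ω : CSeq) : CSeq := fun n =>
  if h : n < u.length then u[n] else ω (n - u.length)

/-- The finite word `u` is a prefix of the infinite word `ω`. -/
def IsPref (u : List Bool) (ω : CSeq) : Prop := ∃ ω', ω = app u ω'

/-- The finite table of branches `T` represents the permutation `g` of the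
Cantor set: the domain codes and the range codes each form a complete prefix
code, and `g` maps `uω ↦ vω` for every branch `(u, v) ∈ T`. -/
def Represents (g : VPerm) (T : Finset (List Bool × List Bool)) : Prop :=
  (∀ ω : CSeq, ∃! p : List Bool × List Bool, p ∈ T ∧ IsPref p.1 ω) ∧
  (∀ ω : CSeq, ∃! p : List Bool × List Bool, p ∈ T ∧ IsPref p.2 ω) ∧
  (∀ p ∈ T, ∀ ω : CSeq, g (app p.1 ω) = app p.2 ω)

/-- A table of branches is reduced if it contains no pair of branches
`u0 → v0`, `u1 → v1`. -/
def Reduced (T : Finset (List Bool × List Bool)) : Prop :=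
  ∀ u v : List Bool,
    ¬((u ++ [false], v ++ [false]) ∈ T ∧ (u ++ [true], v ++ [true]) ∈ T)

/-- Membership in Thompson's group `V`. -/
def InV (g : VPerm) : Prop := ∃ T, Represents g T

/-- `u → v` is a branch of the (unique) reduced representation of `g`. -/
def IsBranch (g : VPerm) (u v : List Bool) : Prop :=
  ∃ T, Represents g T ∧ Reduced T ∧ (u, v) ∈ T

/-- `N(g)`: the number of branches of the reduced representation of `g`. -/
noncomputable def Nbr (g : VPerm) : ℕ :=
  sInf {n | ∃ T, Represents g T ∧ Reduced T ∧ T.card = n}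

/-- `ℓ0(g)`: the unique `ℓ ≥ 1` such that `0^ℓ` is the range code of some
branch of `g`. -/
noncomputable def ell0 (g : VPerm) : ℕ :=
  sInf {ℓ | 1 ≤ ℓ ∧ ∃ u, IsBranch g u (List.replicate ℓ false)}

/-- `ℓ1(g)`: the unique `ℓ ≥ 1` such that `1^ℓ` is the range code of some
branch of `g`. -/
noncomputable def ell1 (g : VPerm) : ℕ :=
  sInf {ℓ | 1 ≤ ℓ ∧ ∃ u, IsBranch g u (List.replicate ℓ true)}

/-- `w` is a strict prefix of the range code of some branch of `g`. -/
def StrictPrefOfBranch (g : VPerm) (w : List Bool) : Prop :=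
  ∃ u v, IsBranch g u v ∧ w <+: v ∧ w ≠ v

/-- Strict lexicographic order on infinite binary words. -/
def lexLt (a b : CSeq) : Prop :=
  ∃ n, (∀ i < n, a i = b i) ∧ a n = false ∧ b n = true

/-- Membership in Thompson's group `F`: an element of `V` preserving the
(lexicographic) order of the Cantor set. -/
def InF (g : VPerm) : Prop :=
  InV g ∧ ∀ a b : CSeq, lexLt a b → lexLt (g a) (g b)

/-- `(a, b, c)` is a (strict) cyclically ordered triple. -/
def cyc3 (a b c : CSeq) : Prop :=
  (lexLt a b ∧ lexLt b c) ∨ (lexLt b c ∧ lexLt c a) ∨ (lexLt c a ∧ lexLt a b)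

/-- Membership in Thompson's group `T`: an element of `V` preserving the
cyclic order of the Cantor set. -/
def InT (g : VPerm) : Prop :=
  InV g ∧ ∀ a b c : CSeq, cyc3 a b c → cyc3 (g a) (g b) (g c)

/-- Word length of `g` with respect to the generating set `S` (letters are
elements of `S` or inverses of elements of `S`). -/
noncomputable def wlen (S : Set VPerm) (g : VPerm) : ℕ :=
  sInf {n | ∃ l : List VPerm,
    l.length = n ∧ (∀ x ∈ l, x ∈ S ∨ x⁻¹ ∈ S) ∧ l.prod = g}

/-- `h'` is the copy `h_{[u]}` of `h` supported on the cylinder of `u`. -/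
def IsCopy (h : VPerm) (u : List Bool) (h' : VPerm) : Prop :=
  (∀ ω : CSeq, h' (app u ω) = app u (h ω)) ∧
  (∀ ω : CSeq, ¬ IsPref u ω → h' ω = ω)

/-- Evaluation (left-to-right) of the word `w` starting at the element `g`:
the paper's product `g · w`. -/
def wordEval (g : VPerm) (w : List VPerm) : VPerm :=
  w.foldl (fun a b => a.trans b) g

/-- Branches of the generator `x0`: `00→0`, `01→10`, `1→11`. -/
def x0T : Finset (List Bool × List Bool) :=
  {([false, false], [false]), ([false, true], [true, false]),
   ([true], [true, true])}

/-- Branches of the generator `x1`: `0→0`, `100→10`, `101→110`, `11→111`. -/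
def x1T : Finset (List Bool × List Bool) :=
  {([false], [false]), ([true, false, false], [true, false]),
   ([true, false, true], [true, true, false]),
   ([true, true], [true, true, true])}

/-- Branches of the generator `c1`: `0→10`, `10→11`, `11→0`. -/
def c1T : Finset (List Bool × List Bool) :=
  {([false], [true, false]), ([true, false], [true, true]),
   ([true, true], [false])}

/-- Branches of the generator `π0`: `0→10`, `10→0`, `11→11`. -/
def pi0T : Finset (List Bool × List Bool) :=
  {([false], [true, false]), ([true, false], [false]),
   ([true, true], [true, true])}

/-- The standard generators `x_j`, `j ≥ 0`, of `F`: for `r ≥ 1`,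
`x_{r+1} = x0^{-r} · x1 · x0^{r}` in the left-to-right convention of the
paper, i.e. `x0 ^ r * x1 * (x0⁻¹) ^ r` in `Equiv.Perm`. -/
def xseq (x0 x1 : VPerm) : ℕ → VPerm
  | 0 => x0
  | r + 1 => x0 ^ r * x1 * (x0⁻¹) ^ r

-- chunk 1 : app / IsPref basics

lemma app_lt {u : List Bool} {ω : CSeq} {n : ℕ} (h : n < u.length) :
    app u ω n = u[n] := by simp [app, h]

lemma app_ge {u : List Bool} {ω : CSeq} {n : ℕ} (h : u.length ≤ n) :
    app u ω n = ω (n - u.length) := by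
  simp [app, Nat.not_lt.mpr h]

lemma app_append (u v : List Bool) (ω : CSeq) :
    app (u ++ v) ω = app u (app v ω) := by
  funext n
  by_cases h1 : n < u.length
  · rw [app_lt (by simp; omega), app_lt h1, List.getElem_append_left h1]
  · push_neg at h1
    by_cases h2 : n < u.length + v.length
    · rw [app_lt (by simp; omega), app_ge h1, app_lt (by omega),
        List.getElem_append_right h1]
    · rw [app_ge (by simp; omega), app_ge h1, app_ge (by omega)]
      congr 1
      simp only [List.length_append]
      omega

lemma isPref_iff {u : List Bool} {ω : CSeq} :
    IsPref u ω ↔ ∀ i, (hi : i < u.length) → ω i = u[i] := by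
  constructor
  · rintro ⟨ω', rfl⟩ i hi; exact app_lt hi
  · intro h
    refine ⟨fun n => ω (n + u.length), ?_⟩
    funext n
    by_cases hn : n < u.length
    · rw [app_lt hn]; exact h n hn
    · rw [app_ge (by omega)]
      congr 1; omega

lemma isPref_app_self (u : List Bool) (ω : CSeq) : IsPref u (app u ω) := ⟨ω, rfl⟩

lemma app_inj {u : List Bool} {ω ω' : CSeq} (h : app u ω = app u ω') : ω = ω' := by
  funext n
  have := congrFun h (n + u.length)
  rwa [app_ge (by omega), app_ge (by omega), Nat.add_sub_cancel] at this

lemma pref_pref {a b : List Bool} {ω : CSeq} (ha : IsPref a ω) (hb : IsPref b ω)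
    (hl : a.length ≤ b.length) : a <+: b := by
  rw [isPref_iff] at ha hb
  rw [List.prefix_iff_eq_take]
  apply List.ext_getElem (by simp; omega)
  intro i h1 h2
  simp only [List.getElem_take]
  rw [← ha i h1, hb i (by omega)]

lemma pref_comparable {a b : List Bool} {ω : CSeq} (ha : IsPref a ω) (hb : IsPref b ω) :
    a <+: b ∨ b <+: a := by
  rcases le_total a.length b.length with h | h
  · exact Or.inl (pref_pref ha hb h)
  · exact Or.inr (pref_pref hb ha h)

lemma isPref_of_prefix {a b : List Bool} {ω : CSeq} (h : a <+: b) (hb : IsPref b ω) :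
    IsPref a ω := by
  obtain ⟨c, rfl⟩ := h
  obtain ⟨σ, rfl⟩ := hb
  rw [app_append]
  exact isPref_app_self _ _

lemma isPref_app_iff {b s : List Bool} {σ : CSeq} :
    IsPref (b ++ s) (app b σ) ↔ IsPref s σ := by
  constructor
  · rintro ⟨τ, hτ⟩
    rw [app_append] at hτ
    exact ⟨τ, app_inj hτ⟩
  · rintro ⟨τ, rfl⟩
    rw [← app_append]
    exact isPref_app_self _ _

lemma word_ext {a b : List Bool} (h : ∀ ω, app a ω = app b ω) : a = b := by
  have key : ∀ (a b : List Bool), (∀ ω : CSeq, app a ω = app b ω) → a <+: b → a = b := by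
    rintro a b h ⟨c, rfl⟩
    cases c with
    | nil => simp
    | cons x c' =>
      exfalso
      have h2 : ∀ ω : CSeq, ω = app (x :: c') ω := by
        intro ω
        have := h ω
        rw [app_append] at this
        exact app_inj this
      have h3 := congrFun (h2 (fun _ => !x)) 0
      rw [app_lt (by simp)] at h3
      simp at h3
  have ω0 : CSeq := fun _ => true
  have hcomp : a <+: b ∨ b <+: a :=
    pref_comparable (isPref_app_self a ω0) ⟨ω0, h ω0⟩
  rcases hcomp with hc | hc
  · exact key a b h hc
  · exact (key b a (fun ω => (h ω).symm) hc).symm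

-- chunk 2 : consequences of Represents

lemma stream_cons (σ : CSeq) : σ = app [σ 0] (fun n => σ (n + 1)) := by
  funext n
  cases n with
  | zero => rw [app_lt (by simp)]; rfl
  | succ m => rw [app_ge (by simp)]; simp

lemma snoc_inj {a b : List Bool} {x y : Bool} (h : a ++ [x] = b ++ [y]) :
    a = b ∧ x = y := by
  have := List.append_inj' h rfl
  simpa using this

lemma pref_snoc_eq {u : List Bool} {b c : Bool} {ω : CSeq}
    (h1 : IsPref (u ++ [b]) ω) (h2 : IsPref (u ++ [c]) ω) : b = c := by
  have h3 : u ++ [b] = u ++ [c] :=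
    (pref_pref h1 h2 (by simp)).eq_of_length (by simp)
  simpa using h3

lemma dom_antichain {g : VPerm} {T : Finset (List Bool × List Bool)}
    (hT : Represents g T) {p q : List Bool × List Bool}
    (hp : p ∈ T) (hq : q ∈ T) (hpq : p.1 <+: q.1) : p = q := by
  obtain ⟨r, -, hu⟩ := hT.1 (app q.1 (fun _ => true))
  have e1 := hu p ⟨hp, isPref_of_prefix hpq (isPref_app_self _ _)⟩
  have e2 := hu q ⟨hq, isPref_app_self _ _⟩
  rw [e1, e2]

lemma rng_antichain {g : VPerm} {T : Finset (List Bool × List Bool)}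
    (hT : Represents g T) {p q : List Bool × List Bool}
    (hp : p ∈ T) (hq : q ∈ T) (hpq : p.2 <+: q.2) : p = q := by
  obtain ⟨r, -, hu⟩ := hT.2.1 (app q.2 (fun _ => true))
  have e1 := hu p ⟨hp, isPref_of_prefix hpq (isPref_app_self _ _)⟩
  have e2 := hu q ⟨hq, isPref_app_self _ _⟩
  rw [e1, e2]

lemma dom_fun {g : VPerm} {T : Finset (List Bool × List Bool)}
    (hT : Represents g T) {u v v' : List Bool}
    (h1 : (u, v) ∈ T) (h2 : (u, v') ∈ T) : v = v' := by
  have := dom_antichain hT h1 h2 (List.prefix_refl _)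
  simpa using this

lemma rng_fun {g : VPerm} {T : Finset (List Bool × List Bool)}
    (hT : Represents g T) {u u' v : List Bool}
    (h1 : (u, v) ∈ T) (h2 : (u', v) ∈ T) : u = u' := by
  have := rng_antichain hT h1 h2 (List.prefix_refl _)
  simpa using this

lemma val_of_ext {g : VPerm} {T : Finset (List Bool × List Bool)}
    (hT : Represents g T) {b r s q : List Bool}
    (hmem : (b ++ s, q) ∈ T) (hpure : ∀ ω, g (app b ω) = app r ω) :
    q = r ++ s := by
  apply word_ext
  intro ω
  have h1 := hT.2.2 _ hmem ω
  simp only at h1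
  rw [app_append, hpure, ← app_append] at h1
  exact h1.symm

-- chunk 3 : split and image constructions

lemma split_represents {g : VPerm} {T : Finset (List Bool × List Bool)}
    (hT : Represents g T) {u v : List Bool} (huv : (u, v) ∈ T) :
    Represents g (insert (u ++ [false], v ++ [false])
      (insert (u ++ [true], v ++ [true]) (T.erase (u, v)))) := by
  set T' := insert (u ++ [false], v ++ [false])
      (insert (u ++ [true], v ++ [true]) (T.erase (u, v))) with hT'
  have hmem : ∀ q, q ∈ T' ↔
      q = (u ++ [false], v ++ [false]) ∨ q = (u ++ [true], v ++ [true]) ∨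
      (q ∈ T ∧ q ≠ (u, v)) := by
    intro q
    simp [hT', Finset.mem_insert, Finset.mem_erase, and_comm]
  refine ⟨?_, ?_, ?_⟩
  · -- domain completeness
    intro ω
    obtain ⟨p, ⟨hp, hppref⟩, huniq⟩ := hT.1 ω
    by_cases hpu : p = (u, v)
    · subst hpu
      obtain ⟨σ, rfl⟩ := hppref
      have hσ : app u σ = app (u ++ [σ 0]) (fun n => σ (n + 1)) := by
        rw [app_append]; exact congrArg _ (stream_cons σ)
      refine ⟨(u ++ [σ 0], v ++ [σ 0]), ⟨?_, ⟨_, hσ⟩⟩, ?_⟩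
      · rw [hmem]; cases h0 : σ 0 <;> simp
      · rintro q ⟨hq, hqpref⟩
        rw [hmem] at hq
        rcases hq with rfl | rfl | ⟨hqT, hqne⟩
        · have := pref_snoc_eq hqpref ⟨_, hσ⟩
          rw [this]
        · have := pref_snoc_eq hqpref ⟨_, hσ⟩
          rw [this]
        · exact absurd (huniq q ⟨hqT, hqpref⟩) hqne
    · refine ⟨p, ⟨?_, hppref⟩, ?_⟩
      · rw [hmem]; exact Or.inr (Or.inr ⟨hp, hpu⟩)
      · rintro q ⟨hq, hqpref⟩
        rw [hmem] at hq
        rcases hq with rfl | rfl | ⟨hqT, hqne⟩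
        · exfalso
          have : IsPref u ω := isPref_of_prefix ⟨[false], rfl⟩ hqpref
          exact hpu ((huniq (u, v) ⟨huv, this⟩).symm ▸ rfl)
        · exfalso
          have : IsPref u ω := isPref_of_prefix ⟨[true], rfl⟩ hqpref
          exact hpu ((huniq (u, v) ⟨huv, this⟩).symm ▸ rfl)
        · exact huniq q ⟨hqT, hqpref⟩
  · -- range completeness
    intro ω
    obtain ⟨p, ⟨hp, hppref⟩, huniq⟩ := hT.2.1 ω
    by_cases hpu : p = (u, v)
    · subst hpu
      obtain ⟨σ, rfl⟩ := hppref
      have hσ : app v σ = app (v ++ [σ 0]) (fun n => σ (n + 1)) := by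
        rw [app_append]; exact congrArg _ (stream_cons σ)
      refine ⟨(u ++ [σ 0], v ++ [σ 0]), ⟨?_, ⟨_, hσ⟩⟩, ?_⟩
      · rw [hmem]; cases h0 : σ 0 <;> simp
      · rintro q ⟨hq, hqpref⟩
        rw [hmem] at hq
        rcases hq with rfl | rfl | ⟨hqT, hqne⟩
        · have := pref_snoc_eq hqpref ⟨_, hσ⟩
          rw [this]
        · have := pref_snoc_eq hqpref ⟨_, hσ⟩
          rw [this]
        · exact absurd (huniq q ⟨hqT, hqpref⟩) hqne
    · refine ⟨p, ⟨?_, hppref⟩, ?_⟩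
      · rw [hmem]; exact Or.inr (Or.inr ⟨hp, hpu⟩)
      · rintro q ⟨hq, hqpref⟩
        rw [hmem] at hq
        rcases hq with rfl | rfl | ⟨hqT, hqne⟩
        · exfalso
          have : IsPref v ω := isPref_of_prefix ⟨[false], rfl⟩ hqpref
          exact hpu ((huniq (u, v) ⟨huv, this⟩).symm ▸ rfl)
        · exfalso
          have : IsPref v ω := isPref_of_prefix ⟨[true], rfl⟩ hqpref
          exact hpu ((huniq (u, v) ⟨huv, this⟩).symm ▸ rfl)
        · exact huniq q ⟨hqT, hqpref⟩
  · -- evaluation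
    intro p hp ω
    rw [hmem] at hp
    rcases hp with rfl | rfl | ⟨hpT, -⟩
    · simp only
      rw [app_append, app_append]
      exact hT.2.2 (u, v) huv _
    · simp only
      rw [app_append, app_append]
      exact hT.2.2 (u, v) huv _
    · exact hT.2.2 p hpT ω

lemma image_represents {g x : VPerm} {T : Finset (List Bool × List Bool)}
    (hT : Represents g T) (ψ : List Bool → List Bool)
    (hx : ∀ p ∈ T, ∀ ω : CSeq, x (app p.2 ω) = app (ψ p.2) ω) :
    Represents (g.trans x) (T.image (fun p => (p.1, ψ p.2))) := by
  have hiff : ∀ p ∈ T, ∀ ω : CSeq, (IsPref (ψ p.2) ω ↔ IsPref p.2 (x.symm ω)) := by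
    intro p hp ω
    constructor
    · rintro ⟨τ, rfl⟩
      refine ⟨τ, ?_⟩
      rw [← hx p hp τ, Equiv.symm_apply_apply]
    · rintro ⟨τ, hτ⟩
      refine ⟨τ, ?_⟩
      rw [← hx p hp τ, ← hτ, Equiv.apply_symm_apply]
  refine ⟨?_, ?_, ?_⟩
  · intro ω
    obtain ⟨p, ⟨hp, hppref⟩, huniq⟩ := hT.1 ω
    refine ⟨(p.1, ψ p.2), ⟨Finset.mem_image_of_mem _ hp, hppref⟩, ?_⟩
    rintro q ⟨hq, hqpref⟩
    obtain ⟨r, hr, rfl⟩ := Finset.mem_image.mp hq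
    rw [huniq r ⟨hr, hqpref⟩]
  · intro ω
    obtain ⟨p, ⟨hp, hppref⟩, huniq⟩ := hT.2.1 (x.symm ω)
    refine ⟨(p.1, ψ p.2), ⟨Finset.mem_image_of_mem _ hp, (hiff p hp ω).mpr hppref⟩, ?_⟩
    rintro q ⟨hq, hqpref⟩
    obtain ⟨r, hr, rfl⟩ := Finset.mem_image.mp hq
    rw [huniq r ⟨hr, (hiff r hr ω).mp hqpref⟩]
  · intro q hq ω
    obtain ⟨r, hr, rfl⟩ := Finset.mem_image.mp hq
    simp only [Equiv.trans_apply]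
    rw [hT.2.2 r hr ω]
    exact hx r hr ω

lemma card_image_psi {g : VPerm} {T : Finset (List Bool × List Bool)}
    (hT : Represents g T) (ψ : List Bool → List Bool) :
    (T.image (fun p => (p.1, ψ p.2))).card = T.card := by
  apply Finset.card_image_of_injOn
  intro p hp q hq hpq
  simp only at hpq
  have h1 : p.1 = q.1 := (Prod.mk.inj hpq).1
  have h2 : p.2 = q.2 := by
    apply dom_fun hT (u := p.1)
    · exact (Prod.mk.eta (p := p)) ▸ hp
    · rw [h1]; exact (Prod.mk.eta (p := q)) ▸ hq
  exact Prod.ext h1 h2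

-- chunk 4 : uniqueness of reduced representations

lemma sib {g : VPerm} {T : Finset (List Bool × List Bool)}
    (hT : Represents g T) {b r : List Bool}
    (H : ∀ σ : CSeq, ∃ s, s ≠ [] ∧ (b ++ s, r ++ s) ∈ T ∧ IsPref s σ) :
    ¬ Reduced T := by
  classical
  intro hred
  set E := T.filter (fun x => ∃ s, s ≠ [] ∧ x = (b ++ s, r ++ s)) with hE
  have hne : E.Nonempty := by
    obtain ⟨s, hs, hmem, -⟩ := H (fun _ => true)
    exact ⟨(b ++ s, r ++ s), Finset.mem_filter.mpr ⟨hmem, s, hs, rfl⟩⟩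
  obtain ⟨x, hxE, hmax⟩ := E.exists_max_image (fun x => x.1.length) hne
  obtain ⟨hxT, s, hs, rfl⟩ := Finset.mem_filter.mp hxE
  rcases List.eq_nil_or_concat s with rfl | ⟨s0, c, rfl⟩
  · exact hs rfl
  simp only [List.concat_eq_append] at hxT hmax hs ⊢
  obtain ⟨s', hs'ne, hs'T, hs'pref⟩ := H (app (s0 ++ [!c]) (fun _ => true))
  have hlen : s'.length ≤ s0.length + 1 := by
    have := hmax (b ++ s', r ++ s') (Finset.mem_filter.mpr ⟨hs'T, s', hs'ne, rfl⟩)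
    simp only [List.concat_eq_append] at this
    simp at this
    omega
  have hpref2 : s' <+: s0 ++ [!c] :=
    pref_pref hs'pref (isPref_app_self _ _) (by simp; omega)
  have hs'eq : s' = s0 ++ [!c] := by
    by_contra hne2
    have hlt : s'.length ≤ s0.length := by
      rcases Nat.lt_or_ge s'.length (s0.length + 1) with h | h
      · omega
      · exact absurd (hpref2.eq_of_length (by simp; omega)) hne2
    have hps0 : s' <+: s0 := by
      have h := List.prefix_iff_eq_take.mp hpref2
      rw [List.take_append_of_le_length hlt] at h
      rw [h]
      exact List.take_prefix _ _
    have hps1 : s' <+: s0 ++ [c] := hps0.trans (List.prefix_append s0 [c])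
    obtain ⟨t, ht⟩ := hps1
    have : (b ++ s', r ++ s') = (b ++ (s0 ++ [c]), r ++ (s0 ++ [c])) := by
      apply dom_antichain hT hs'T hxT
      exact ⟨t, by simp only [← ht, List.append_assoc]⟩
    have hl := congrArg (fun z => (z : List Bool × List Bool).1.length) this
    simp at hl
    omega
  subst hs'eq
  have h1 : ((b ++ s0) ++ [c], (r ++ s0) ++ [c]) ∈ T := by
    simpa [List.append_assoc] using hxT
  have h2 : ((b ++ s0) ++ [!c], (r ++ s0) ++ [!c]) ∈ T := by
    simpa [List.append_assoc] using hs'T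
  cases c
  · exact hred (b ++ s0) (r ++ s0) ⟨h1, by simpa using h2⟩
  · exact hred (b ++ s0) (r ++ s0) ⟨by simpa using h2, h1⟩

lemma key_mem {g : VPerm} {T T' : Finset (List Bool × List Bool)}
    (hT : Represents g T) (hRT : Reduced T)
    (hT' : Represents g T') (hRT' : Reduced T')
    {p q : List Bool} (hpq : (p, q) ∈ T') : (p, q) ∈ T := by
  have hpure : ∀ ω, g (app p ω) = app q ω := hT'.2.2 _ hpq
  obtain ⟨x, ⟨hx, hxpref⟩, -⟩ := hT.1 (app p (fun _ => true))
  rcases pref_comparable hxpref (isPref_app_self p _) with hbp | hpb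
  · -- x.1 <+: p
    obtain ⟨t, ht⟩ := hbp
    have hxpure : ∀ ω, g (app x.1 ω) = app x.2 ω := hT.2.2 x hx
    have hq : q = x.2 ++ t := by
      apply word_ext
      intro ω
      calc app q ω = g (app p ω) := (hpure ω).symm
        _ = app (x.2 ++ t) ω := by
            rw [← ht, app_append, hxpure, ← app_append]
    rcases List.eq_nil_or_concat t with rfl | ⟨t0, c, htc⟩
    · have hxeq : x = (p, q) := by
        have h1 : x.1 = p := by simpa using ht
        have h2 : x.2 = q := by simp [hq]
        rw [← h1, ← h2]
      rw [← hxeq]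
      exact hx
    · -- t ≠ [] : contradiction with Reduced T'
      exfalso
      have htne : t ≠ [] := by simp [htc]
      apply sib hT' (b := x.1) (r := x.2) ?_ hRT'
      intro σ
      obtain ⟨y, ⟨hy, hypref⟩, -⟩ := hT'.1 (app x.1 σ)
      have hnot : ¬ y.1 <+: x.1 := by
        intro hle
        have h2 : y.1 <+: p := hle.trans ⟨t, ht⟩
        have h3 : y = (p, q) := dom_antichain hT' hy hpq h2
        have h4 : y.1.length ≤ x.1.length := hle.length_le
        have h5 : p.length = x.1.length + t.length := by rw [← ht]; simp
        rw [h3] at h4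
        simp at h4
        have : t.length = 0 := by omega
        exact htne (List.eq_nil_of_length_eq_zero this)
      rcases pref_comparable hypref (isPref_app_self x.1 σ) with h | h
      · exact absurd h hnot
      · obtain ⟨s, hsy⟩ := h
        have hsne : s ≠ [] := by
          rintro rfl
          exact hnot (by simp at hsy; rw [hsy])
        have hy1 : (x.1 ++ s, y.2) ∈ T' := by
          rw [hsy, Prod.mk.eta]
          exact hy
        have hy2 : y.2 = x.2 ++ s := val_of_ext hT' hy1 hxpure
        refine ⟨s, hsne, ?_, ?_⟩
        · rw [← hy2]
          exact hy1
        · rw [← hsy] at hypref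
          exact isPref_app_iff.mp hypref
  · -- p <+: x.1
    obtain ⟨t, ht⟩ := hpb
    have hx1 : (p ++ t, x.2) ∈ T := by
      rw [ht, Prod.mk.eta]
      exact hx
    have hx2 : x.2 = q ++ t := val_of_ext hT hx1 hpure
    rcases List.eq_nil_or_concat t with rfl | ⟨t0, c, htc⟩
    · rw [hx2] at hx1
      simpa using hx1
    · exfalso
      have htne : t ≠ [] := by simp [htc]
      apply sib hT (b := p) (r := q) ?_ hRT
      intro σ
      obtain ⟨y, ⟨hy, hypref⟩, -⟩ := hT.1 (app p σ)
      have hnot : ¬ y.1 <+: p := by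
        intro hle
        have h2 : y.1 <+: x.1 := hle.trans ⟨t, ht⟩
        have h3 : y = x := dom_antichain hT hy hx h2
        have h4 : y.1.length ≤ p.length := hle.length_le
        have h5 : x.1.length = p.length + t.length := by rw [← ht]; simp
        rw [h3] at h4
        have : t.length = 0 := by omega
        exact htne (List.eq_nil_of_length_eq_zero this)
      rcases pref_comparable hypref (isPref_app_self p σ) with h | h
      · exact absurd h hnot
      · obtain ⟨s, hsy⟩ := h
        have hsne : s ≠ [] := by
          rintro rfl
          exact hnot (by simp at hsy; rw [hsy])
        have hy1 : (p ++ s, y.2) ∈ T := by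
          rw [hsy, Prod.mk.eta]
          exact hy
        have hy2 : y.2 = q ++ s := val_of_ext hT hy1 hpure
        refine ⟨s, hsne, ?_, ?_⟩
        · rw [← hy2]
          exact hy1
        · rw [← hsy] at hypref
          exact isPref_app_iff.mp hypref

lemma reduced_unique {g : VPerm} {T T' : Finset (List Bool × List Bool)}
    (hT : Represents g T) (hRT : Reduced T)
    (hT' : Represents g T') (hRT' : Reduced T') : T = T' := by
  apply Finset.Subset.antisymm
  · intro x hx
    have := key_mem hT' hRT' hT hRT (p := x.1) (q := x.2) (by rw [Prod.mk.eta]; exact hx)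
    rwa [Prod.mk.eta] at this
  · intro x hx
    have := key_mem hT hRT hT' hRT' (p := x.1) (q := x.2) (by rw [Prod.mk.eta]; exact hx)
    rwa [Prod.mk.eta] at this

lemma nbr_eq {g : VPerm} {T : Finset (List Bool × List Bool)}
    (hT : Represents g T) (hR : Reduced T) :
    sInf {n | ∃ T', Represents g T' ∧ Reduced T' ∧ T'.card = n} = T.card := by
  have hset : {n | ∃ T', Represents g T' ∧ Reduced T' ∧ T'.card = n} = {T.card} := by
    ext n
    constructor
    · rintro ⟨T', h1, h2, rfl⟩
      rw [Set.mem_singleton_iff, reduced_unique h1 h2 hT hR]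
    · rintro rfl
      exact ⟨T, hT, hR, rfl⟩
  rw [hset, csInf_singleton]

-- chunk 5 : range length bound

lemma range_length_lt {g : VPerm} {T : Finset (List Bool × List Bool)}
    (hT : Represents g T) {u v : List Bool} (huv : (u, v) ∈ T) :
    v.length < T.card := by
  classical
  set d := v.length with hd
  set σ : ℕ → CSeq := fun j => app (v.take j ++ [!(v.getD j false)]) (fun _ => true) with hσ
  set f : ℕ → List Bool × List Bool :=
    fun j => if h : j < d then Classical.choose (hT.2.1 (σ j)).exists else (u, v) with hf
  have hspec : ∀ j, j < d → f j ∈ T ∧ IsPref (f j).2 (σ j) := by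
    intro j hj
    rw [hf]
    simp only [dif_pos hj]
    exact Classical.choose_spec (hT.2.1 (σ j)).exists
  have hlentake : ∀ j, j < d → (v.take j).length = j := by
    intro j hj; simp; omega
  have claimA : ∀ j, j < d →
      j < (f j).2.length ∧ (f j).2.getD j false = !(v.getD j false) := by
    intro j hj
    obtain ⟨hfT, hfpref⟩ := hspec j hj
    have hjlen : j < (f j).2.length := by
      by_contra hle
      push_neg at hle
      have htakepref : IsPref (v.take j) (σ j) :=
        isPref_of_prefix (List.prefix_append _ _) (isPref_app_self _ _)
      have h1 : (f j).2 <+: v.take j :=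
        pref_pref hfpref htakepref (by rw [hlentake j hj]; exact hle)
      have h2 : (f j).2 <+: v := h1.trans (List.take_prefix _ _)
      have h3 : f j = (u, v) := rng_antichain hT hfT huv h2
      have h4 : (f j).2.length = d := by rw [h3]
      omega
    refine ⟨hjlen, ?_⟩
    have hval := (isPref_iff.mp hfpref) j hjlen
    rw [List.getD_eq_getElem _ _ hjlen, ← hval, hσ]
    simp only
    rw [app_lt (by simp; omega)]
    rw [List.getElem_append_right (by rw [hlentake j hj])]
    simp [hlentake j hj]
  have claimB : ∀ i j, i < j → j < d → (f j).2.getD i false = v.getD i false := by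
    intro i j hij hj
    obtain ⟨hfT, hfpref⟩ := hspec j hj
    have hjlen := (claimA j hj).1
    have hival : i < (f j).2.length := by omega
    have hval := (isPref_iff.mp hfpref) i hival
    rw [List.getD_eq_getElem _ _ hival, ← hval, hσ]
    simp only
    rw [app_lt (by simp; omega)]
    rw [List.getElem_append_left (by rw [hlentake j hj]; omega)]
    rw [List.getElem_take]
    rw [List.getD_eq_getElem _ _ (by omega)]
  have hmaps : ∀ j ∈ Finset.range (d + 1), f j ∈ T := by
    intro j hj
    rcases Nat.lt_or_ge j d with h | h
    · exact (hspec j h).1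
    · rw [hf]
      simp only [Finset.mem_range] at hj
      have : ¬ j < d := by omega
      simp only [dif_neg this]
      exact huv
  have hinj : Set.InjOn f (Finset.range (d + 1)) := by
    have hkey : ∀ i j, i < j → j < d + 1 → f i ≠ f j := by
      intro i j hij hj heq
      have hid : i < d := by omega
      have hAi := claimA i hid
      rcases Nat.lt_or_ge j d with h | h
      · have hBj := claimB i j hij h
        rw [heq] at hAi
        rw [hAi.2] at hBj
        simp at hBj
      · have hjd : j = d := by omega
        have hfj : f j = (u, v) := by
          rw [hf]; simp only [hjd]; simp
        rw [hfj] at heq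
        have : (f i).2.getD i false = v.getD i false := by rw [heq]
        rw [hAi.2] at this
        simp at this
    intro i hi j hj heq
    simp only [Finset.coe_range, Set.mem_Iio] at hi hj
    rcases lt_trichotomy i j with h | h | h
    · exact absurd heq (hkey i j h hj)
    · exact h
    · exact absurd heq.symm (hkey j i h hi)
  have := Finset.card_le_card_of_injOn f hmaps hinj
  simpa using this

-- chunk 6 : the rewriting maps and generator equations

def phi : List Bool → List Bool
  | [] => []
  | [true] => [true]
  | false :: s => false :: false :: s
  | true :: false :: s => false :: true :: s
  | true :: true :: s => true :: s

def psi : List Bool → List Bool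
  | [] => []
  | [false] => [false]
  | false :: false :: s => false :: s
  | false :: true :: s => true :: false :: s
  | true :: s => true :: true :: s

def xi : List Bool → List Bool
  | false :: s => false :: s
  | true :: false :: false :: s => true :: false :: s
  | true :: false :: true :: s => true :: true :: false :: s
  | true :: true :: s => true :: true :: true :: s
  | l => l

@[simp] lemma phi_f (s : List Bool) : phi (false :: s) = false :: false :: s := by
  cases s <;> rfl
@[simp] lemma phi_tf (s : List Bool) : phi (true :: false :: s) = false :: true :: s := rfl
@[simp] lemma phi_tt (s : List Bool) : phi (true :: true :: s) = true :: s := rfl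

@[simp] lemma psi_ff (s : List Bool) : psi (false :: false :: s) = false :: s := rfl
@[simp] lemma psi_ft (s : List Bool) : psi (false :: true :: s) = true :: false :: s := rfl
@[simp] lemma psi_t (s : List Bool) : psi (true :: s) = true :: true :: s := by
  cases s with
  | nil => rfl
  | cons a t => cases a <;> rfl

@[simp] lemma xi_f (s : List Bool) : xi (false :: s) = false :: s := rfl
@[simp] lemma xi_tff (s : List Bool) : xi (true :: false :: false :: s) = true :: false :: s := rfl
@[simp] lemma xi_tft (s : List Bool) : xi (true :: false :: true :: s) = true :: true :: false :: s := rfl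
@[simp] lemma xi_tt (s : List Bool) : xi (true :: true :: s) = true :: true :: true :: s := by
  cases s with
  | nil => rfl
  | cons a t => cases a <;> rfl

lemma cons_as_append (x : Bool) (s : List Bool) (ω : CSeq) :
    app (x :: s) ω = app [x] (app s ω) := by
  rw [show (x :: s) = [x] ++ s from rfl, app_append]

lemma cons2_as_append (x y : Bool) (s : List Bool) (ω : CSeq) :
    app (x :: y :: s) ω = app [x, y] (app s ω) := by
  rw [show (x :: y :: s) = [x, y] ++ s from rfl, app_append]

lemma cons3_as_append (x y z : Bool) (s : List Bool) (ω : CSeq) :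
    app (x :: y :: z :: s) ω = app [x, y, z] (app s ω) := by
  rw [show (x :: y :: z :: s) = [x, y, z] ++ s from rfl, app_append]

-- x0 equations
lemma x0_eq1 {x0 : VPerm} (hx0 : Represents x0 x0T) (τ : CSeq) :
    x0 (app [false, false] τ) = app [false] τ :=
  hx0.2.2 ([false, false], [false]) (by simp [x0T]) τ

lemma x0_eq2 {x0 : VPerm} (hx0 : Represents x0 x0T) (τ : CSeq) :
    x0 (app [false, true] τ) = app [true, false] τ :=
  hx0.2.2 ([false, true], [true, false]) (by simp [x0T]) τ

lemma x0_eq3 {x0 : VPerm} (hx0 : Represents x0 x0T) (τ : CSeq) :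
    x0 (app [true] τ) = app [true, true] τ :=
  hx0.2.2 ([true], [true, true]) (by simp [x0T]) τ

lemma x0_psi {x0 : VPerm} (hx0 : Represents x0 x0T) {v : List Bool}
    (hv : 2 ≤ v.length) (ω : CSeq) : x0 (app v ω) = app (psi v) ω := by
  match v, hv with
  | false :: false :: s, _ =>
      rw [psi_ff]
      show x0 (app ([false, false] ++ s) ω) = app ([false] ++ s) ω
      rw [app_append, app_append, x0_eq1 hx0]
  | false :: true :: s, _ =>
      rw [psi_ft]
      show x0 (app ([false, true] ++ s) ω) = app ([true, false] ++ s) ω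
      rw [app_append, app_append, x0_eq2 hx0]
  | true :: b :: s, _ =>
      rw [psi_t]
      show x0 (app ([true] ++ (b :: s)) ω) = app ([true, true] ++ (b :: s)) ω
      rw [app_append, app_append, x0_eq3 hx0]

lemma x0inv_phi {x0 : VPerm} (hx0 : Represents x0 x0T) {v : List Bool}
    (hv : 2 ≤ v.length) (ω : CSeq) : x0⁻¹ (app v ω) = app (phi v) ω := by
  have key : x0 (app (phi v) ω) = app v ω := by
    match v, hv with
    | false :: s, hv =>
        rw [phi_f]
        show x0 (app ([false, false] ++ s) ω) = app ([false] ++ s) ω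
        rw [app_append, app_append, x0_eq1 hx0]
    | true :: false :: s, _ =>
        rw [phi_tf]
        show x0 (app ([false, true] ++ s) ω) = app ([true, false] ++ s) ω
        rw [app_append, app_append, x0_eq2 hx0]
    | true :: true :: s, _ =>
        rw [phi_tt]
        show x0 (app ([true] ++ s) ω) = app ([true, true] ++ s) ω
        rw [app_append, app_append, x0_eq3 hx0]
  rw [← key]
  simp

lemma x1_xi_f {x1 : VPerm} (hx1 : Represents x1 x1T) (s : List Bool) (ω : CSeq) :
    x1 (app (false :: s) ω) = app (xi (false :: s)) ω := by
  rw [xi_f]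
  show x1 (app ([false] ++ s) ω) = app ([false] ++ s) ω
  rw [app_append, hx1.2.2 ([false], [false]) (by simp [x1T]) (app s ω)]

lemma x1_xi_tff {x1 : VPerm} (hx1 : Represents x1 x1T) (ω : CSeq) :
    x1 (app [true, false, false] ω) = app (xi [true, false, false]) ω :=
  hx1.2.2 ([true, false, false], [true, false]) (by simp [x1T]) ω

lemma x1_xi_tft {x1 : VPerm} (hx1 : Represents x1 x1T) (ω : CSeq) :
    x1 (app [true, false, true] ω) = app (xi [true, false, true]) ω :=
  hx1.2.2 ([true, false, true], [true, true, false]) (by simp [x1T]) ω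

lemma x1_xi_tt {x1 : VPerm} (hx1 : Represents x1 x1T) (ω : CSeq) :
    x1 (app [true, true] ω) = app (xi [true, true]) ω :=
  hx1.2.2 ([true, true], [true, true, true]) (by simp [x1T]) ω

-- chunk 7 : reducedness of image tables

lemma core_psi_reduced {Tp : Finset (List Bool × List Bool)}
    (hl : ∀ p ∈ Tp, 2 ≤ p.2.length) (hR : Reduced Tp) :
    Reduced (Tp.image (fun p => (p.1, psi p.2))) := by
  rintro a B ⟨h0, h1⟩
  obtain ⟨⟨d0, v0⟩, hp0, he0⟩ := Finset.mem_image.mp h0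
  obtain ⟨⟨d1, v1⟩, hp1, he1⟩ := Finset.mem_image.mp h1
  simp only [Prod.mk.injEq] at he0 he1
  obtain ⟨he0a, he0b⟩ := he0
  obtain ⟨he1a, he1b⟩ := he1
  subst he0a he1a
  have hl0 := hl _ hp0
  have hl1 := hl _ hp1
  simp only at hl0 hl1 he0b he1b
  rcases v0 with _ | ⟨x0, v0⟩
  · simp at hl0
  rcases v1 with _ | ⟨x1, v1⟩
  · simp at hl1
  cases x0
  case true =>
    -- psi (true :: v0) = true :: true :: v0
    rw [psi_t] at he0b
    cases x1
    case true =>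
      rw [psi_t] at he1b
      rcases B with _ | ⟨b0, _ | ⟨b1, C⟩⟩
      · simp at he0b
      · simp at he0b
      · simp only [List.cons_append, List.nil_append, List.cons.injEq] at he0b he1b
        obtain ⟨rfl, rfl, hv0⟩ := he0b
        obtain ⟨-, -, hv1⟩ := he1b
        exact hR a (true :: C) ⟨by simpa [hv0] using hp0, by simpa [hv1] using hp1⟩
    case false =>
      rcases v1 with _ | ⟨y1, s1⟩
      · simp at hl1
      cases y1
      case false =>
        rw [psi_ff] at he1b
        rcases B with _ | ⟨b0, _ | ⟨b1, C⟩⟩ <;> (clear h0 h1 hp0 hp1 hR hl; simp_all)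
      case true =>
        rw [psi_ft] at he1b
        rcases B with _ | ⟨b0, _ | ⟨b1, C⟩⟩ <;> (clear h0 h1 hp0 hp1 hR hl; simp_all)
  case false =>
    rcases v0 with _ | ⟨y0, s0⟩
    · simp at hl0
    cases x1
    case true =>
      rw [psi_t] at he1b
      cases y0
      case false =>
        rw [psi_ff] at he0b
        rcases B with _ | ⟨b0, _ | ⟨b1, C⟩⟩ <;> (clear h0 h1 hp0 hp1 hR hl; simp_all)
      case true =>
        rw [psi_ft] at he0b
        rcases B with _ | ⟨b0, _ | ⟨b1, C⟩⟩ <;> (clear h0 h1 hp0 hp1 hR hl; simp_all)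
    case false =>
      rcases v1 with _ | ⟨y1, s1⟩
      · simp at hl1
      cases y0 <;> cases y1
      case false.false =>
        rw [psi_ff] at he0b
        rw [psi_ff] at he1b
        rcases B with _ | ⟨b0, _ | ⟨b1, C⟩⟩
        · simp at he1b
        · -- B = [b0] : survivor [0,0,0] / [0,0,1]
          simp only [List.cons_append, List.nil_append, List.cons.injEq] at he0b he1b
          obtain ⟨rfl, hs0⟩ := he0b
          obtain ⟨-, hs1⟩ := he1b
          exact hR a [false, false] ⟨by simpa [hs0] using hp0, by simpa [hs1] using hp1⟩
        · simp only [List.cons_append, List.nil_append, List.cons.injEq] at he0b he1b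
          obtain ⟨rfl, hs0⟩ := he0b
          obtain ⟨-, hs1⟩ := he1b
          subst hs0 hs1
          exact hR a (false :: false :: b1 :: C)
            ⟨by simpa using hp0, by simpa using hp1⟩
      case false.true =>
        rw [psi_ff] at he0b
        rw [psi_ft] at he1b
        rcases B with _ | ⟨b0, _ | ⟨b1, C⟩⟩ <;> (clear h0 h1 hp0 hp1 hR hl; simp_all)
      case true.false =>
        rw [psi_ft] at he0b
        rw [psi_ff] at he1b
        rcases B with _ | ⟨b0, _ | ⟨b1, C⟩⟩ <;> (clear h0 h1 hp0 hp1 hR hl; simp_all)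
      case true.true =>
        rw [psi_ft] at he0b
        rw [psi_ft] at he1b
        rcases B with _ | ⟨b0, _ | ⟨b1, C⟩⟩
        · simp at he0b
        · simp at he1b
        · simp only [List.cons_append, List.nil_append, List.cons.injEq] at he0b he1b
          obtain ⟨rfl, rfl, hs0⟩ := he0b
          obtain ⟨-, -, hs1⟩ := he1b
          subst hs0 hs1
          exact hR a (false :: true :: C) ⟨by simpa using hp0, by simpa using hp1⟩

lemma core_phi_reduced {Tp : Finset (List Bool × List Bool)}
    (hl : ∀ p ∈ Tp, 2 ≤ p.2.length)
    (hX : ∀ a C : List Bool, (a ++ [false], C ++ [false]) ∈ Tp →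
      (a ++ [true], C ++ [true]) ∈ Tp → C ≠ [true] → False) :
    Reduced (Tp.image (fun p => (p.1, phi p.2))) := by
  rintro a B ⟨h0, h1⟩
  obtain ⟨⟨d0, v0⟩, hp0, he0⟩ := Finset.mem_image.mp h0
  obtain ⟨⟨d1, v1⟩, hp1, he1⟩ := Finset.mem_image.mp h1
  simp only [Prod.mk.injEq] at he0 he1
  obtain ⟨he0a, he0b⟩ := he0
  obtain ⟨he1a, he1b⟩ := he1
  subst he0a he1a
  have hl0 := hl _ hp0
  have hl1 := hl _ hp1
  simp only at hl0 hl1 he0b he1b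
  rcases v0 with _ | ⟨x0, v0⟩
  · simp at hl0
  rcases v1 with _ | ⟨x1, v1⟩
  · simp at hl1
  cases x0
  case false =>
    rw [phi_f] at he0b
    cases x1
    case false =>
      rw [phi_f] at he1b
      rcases B with _ | ⟨b0, _ | ⟨b1, C⟩⟩
      · simp at he0b
      · simp only [List.cons_append, List.nil_append, List.cons.injEq] at he0b
        obtain ⟨-, -, rfl⟩ := he0b
        simp at hl0
      · simp only [List.cons_append, List.nil_append, List.cons.injEq] at he0b he1b
        obtain ⟨rfl, -, hv0⟩ := he0b
        obtain ⟨-, -, hv1⟩ := he1b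
        exact hX a (false :: C) (by simpa [hv0] using hp0) (by simpa [hv1] using hp1)
          (by simp)
    case true =>
      rcases v1 with _ | ⟨y1, s1⟩
      · simp at hl1
      cases y1
      case false =>
        rw [phi_tf] at he1b
        rcases B with _ | ⟨b0, _ | ⟨b1, C⟩⟩ <;> (clear h0 h1 hp0 hp1 hX hl; simp_all)
      case true =>
        rw [phi_tt] at he1b
        rcases B with _ | ⟨b0, _ | ⟨b1, C⟩⟩ <;> (clear h0 h1 hp0 hp1 hX hl; simp_all)
  case true =>
    rcases v0 with _ | ⟨y0, s0⟩
    · simp at hl0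
    cases x1
    case false =>
      rw [phi_f] at he1b
      cases y0
      case false =>
        rw [phi_tf] at he0b
        rcases B with _ | ⟨b0, _ | ⟨b1, C⟩⟩ <;> (clear h0 h1 hp0 hp1 hX hl; simp_all)
      case true =>
        rw [phi_tt] at he0b
        rcases B with _ | ⟨b0, _ | ⟨b1, C⟩⟩ <;> (clear h0 h1 hp0 hp1 hX hl; simp_all)
    case true =>
      rcases v1 with _ | ⟨y1, s1⟩
      · simp at hl1
      cases y0 <;> cases y1
      case false.false =>
        rw [phi_tf] at he0b
        rw [phi_tf] at he1b
        rcases B with _ | ⟨b0, _ | ⟨b1, C⟩⟩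
        · simp at he0b
        · simp at he0b
        · simp only [List.cons_append, List.nil_append, List.cons.injEq] at he0b he1b
          obtain ⟨rfl, rfl, hv0⟩ := he0b
          obtain ⟨-, -, hv1⟩ := he1b
          exact hX a (true :: false :: C) (by simpa [hv0] using hp0)
            (by simpa [hv1] using hp1) (by simp)
      case false.true =>
        rw [phi_tf] at he0b
        rw [phi_tt] at he1b
        rcases B with _ | ⟨b0, _ | ⟨b1, C⟩⟩ <;> (clear h0 h1 hp0 hp1 hX hl; simp_all)
      case true.false =>
        rw [phi_tt] at he0b
        rw [phi_tf] at he1b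
        rcases B with _ | ⟨b0, _ | ⟨b1, C⟩⟩ <;> (clear h0 h1 hp0 hp1 hX hl; simp_all)
      case true.true =>
        rw [phi_tt] at he0b
        rw [phi_tt] at he1b
        rcases B with _ | ⟨b0, _ | ⟨b1, C⟩⟩
        · simp at he0b
        · -- survivor : v0 = [true,true,false], v1 = [true,true,true]
          simp only [List.cons_append, List.nil_append, List.cons.injEq] at he0b he1b
          obtain ⟨rfl, hs0⟩ := he0b
          obtain ⟨-, hs1⟩ := he1b
          exact hX a [true, true] (by simpa [hs0] using hp0)
            (by simpa [hs1] using hp1) (by simp)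
        · simp only [List.cons_append, List.nil_append, List.cons.injEq] at he0b he1b
          obtain ⟨rfl, hs0⟩ := he0b
          obtain ⟨-, hs1⟩ := he1b
          exact hX a (true :: true :: b1 :: C) (by simpa [hs0] using hp0)
            (by simpa [hs1] using hp1) (by simp)

lemma snoc_ne {a b : List Bool} {x y : Bool} (hxy : x ≠ y) (h : a ++ [x] = b ++ [y]) :
    False := hxy (snoc_inj h).2

lemma core_xi_reduced {Tp : Finset (List Bool × List Bool)} {u : List Bool}
    (hshape : ∀ p ∈ Tp, (∃ s, p.2 = false :: s ∧ 2 ≤ p.2.length) ∨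
      p = (u ++ [false, false], [true, false, false]) ∨
      p = (u ++ [false, true], [true, false, true]) ∨
      p = (u ++ [true], [true, true]))
    (hX : ∀ a C : List Bool, (a ++ [false], (false :: C) ++ [false]) ∈ Tp →
      (a ++ [true], (false :: C) ++ [true]) ∈ Tp → False) :
    Reduced (Tp.image (fun p => (p.1, xi p.2))) := by
  rintro a B ⟨h0, h1⟩
  obtain ⟨p0, hp0, he0⟩ := Finset.mem_image.mp h0
  obtain ⟨p1, hp1, he1⟩ := Finset.mem_image.mp h1
  simp only [Prod.mk.injEq] at he0 he1
  obtain ⟨he0a, he0b⟩ := he0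
  obtain ⟨he1a, he1b⟩ := he1
  clear h0 h1
  rcases hshape p1 hp1 with ⟨s1, hv1, hl1⟩ | h | h | h
  · -- p1 has a 0-headed range
    rw [hv1] at he1b
    simp only [xi_f] at he1b
    rcases hshape p0 hp0 with ⟨s0, hv0, hl0⟩ | h' | h' | h'
    · -- main case F/F
      rw [hv0] at he0b
      simp only [xi_f] at he0b
      rcases B with _ | ⟨b0, B⟩
      · simp only [List.nil_append] at he0b
        rw [hv0] at hl0
        rcases s0 with _ | ⟨z, s0⟩
        · simp at hl0
        · simp at he0b
      · simp only [List.cons_append, List.cons.injEq] at he0b he1b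
        obtain ⟨rfl, hs0⟩ := he0b
        obtain ⟨-, hs1⟩ := he1b
        apply hX a B
        · have hp0' : p0 = (a ++ [false], false :: (B ++ [false])) := by
            rw [← he0a, ← hs0, ← hv0]
          rw [hp0'] at hp0
          simpa using hp0
        · have hp1' : p1 = (a ++ [true], false :: (B ++ [true])) := by
            rw [← he1a, ← hs1, ← hv1]
          rw [hp1'] at hp1
          simpa using hp1
    · -- p0 = (u00, [100]) : xi = [10], B = [1]
      rw [h'] at he0b
      have hB : B = [true] :=
        ((snoc_inj (show [true] ++ [false] = B ++ [false] from he0b)).1).symm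
      subst hB
      simp at he1b
    · -- p0 = (u01, [101]) : domain death
      rw [h'] at he0a
      simp only at he0a
      rw [show ([false, true] : List Bool) = [false] ++ [true] from rfl,
        ← List.append_assoc] at he0a
      exact snoc_ne (by simp) he0a
    · -- p0 = (u1, [11]) : xi = [111] ends true ≠ false
      rw [h'] at he0b
      exact snoc_ne (by simp) (show [true, true] ++ [true] = B ++ [false] from he0b)
  · -- p1 = (u00, [100]) : xi ends 0 ≠ 1
    rw [h] at he1b
    exact snoc_ne (by simp) (show [true] ++ [false] = B ++ [true] from he1b)
  · -- p1 = (u01, [101]) : xi = [110] ends 0 ≠ 1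
    rw [h] at he1b
    exact snoc_ne (by simp) (show [true, true] ++ [false] = B ++ [true] from he1b)
  · -- p1 = (u1, [11]) : xi = [111], B = [11]
    rw [h] at he1b
    have hB : B = [true, true] :=
      ((snoc_inj (show [true, true] ++ [true] = B ++ [true] from he1b)).1).symm
    subst hB
    rcases hshape p0 hp0 with ⟨s0, hv0, hl0⟩ | h' | h' | h'
    · rw [hv0] at he0b
      simp only [xi_f] at he0b
      simp at he0b
    · rw [h'] at he0b
      exact absurd (show ([true, false] : List Bool) = [true, true, false] from he0b)
        (by simp)
    · rw [h'] at he0a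
      simp only at he0a
      rw [show ([false, true] : List Bool) = [false] ++ [true] from rfl,
        ← List.append_assoc] at he0a
      exact snoc_ne (by simp) he0a
    · rw [h'] at he0b
      exact absurd (show ([true, true, true] : List Bool) = [true, true, false] from he0b)
        (by simp)

-- chunk 8 : step lemmas

lemma rep_succ2 (k : ℕ) (z : List Bool) :
    List.replicate (k + 2) false ++ z = false :: false :: (List.replicate k false ++ z) := by
  simp [List.replicate_succ]

lemma rep_succ1 (k : ℕ) (z : List Bool) :
    List.replicate (k + 1) false ++ z = false :: (List.replicate k false ++ z) := by
  simp [List.replicate_succ]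

lemma step3 {g x0 : VPerm} (hx0 : Represents x0 x0T)
    {T : Finset (List Bool × List Bool)} (hT : Represents g T) (hR : Reduced T)
    (hl : ∀ p ∈ T, 2 ≤ p.2.length)
    {u1 z : List Bool} {k : ℕ} (hz : z ≠ [])
    (h1 : (u1, List.replicate (k + 2) false ++ z) ∈ T) :
    ∃ T', Represents (g.trans x0) T' ∧ Reduced T' ∧
      (∀ p ∈ T', 2 ≤ p.2.length) ∧
      (u1, List.replicate (k + 1) false ++ z) ∈ T' ∧
      T'.card = T.card := by
  classical
  refine ⟨T.image (fun p => (p.1, psi p.2)), ?_, ?_, ?_, ?_, ?_⟩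
  · exact image_represents hT psi (fun p hp ω => x0_psi hx0 (hl p hp) ω)
  · exact core_psi_reduced hl hR
  · intro p' hp'
    obtain ⟨p, hp, rfl⟩ := Finset.mem_image.mp hp'
    have hlp := hl p hp
    have hnff : p.2 ≠ [false, false] := by
      intro hff
      have hpref : p.2 <+: List.replicate (k + 2) false ++ z := by
        rw [hff, rep_succ2]
        exact ⟨List.replicate k false ++ z, rfl⟩
      have := rng_antichain hT hp h1 hpref
      rw [this] at hff
      simp only at hff
      have hlen := congrArg List.length hff
      simp at hlen
      have hzl : 0 < z.length := List.length_pos_iff.mpr hz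
      omega
    rcases p with ⟨d, v⟩
    simp only at hlp hnff ⊢
    rcases v with _ | ⟨x, v⟩
    · simp at hlp
    rcases v with _ | ⟨y, v⟩
    · simp at hlp
    cases x
    · cases y
      · rw [psi_ff]
        rcases v with _ | ⟨w, v⟩
        · exact absurd rfl hnff
        · simp
      · rw [psi_ft]; simp
    · rw [psi_t]; simp
  · have : (u1, psi (List.replicate (k + 2) false ++ z)) ∈
        T.image (fun p => (p.1, psi p.2)) := Finset.mem_image_of_mem _ h1
    rw [rep_succ2, psi_ff, ← rep_succ1] at this
    exact this
  · exact card_image_psi hT psi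

lemma step1 {g x0 : VPerm} (hx0 : Represents x0 x0T)
    {T : Finset (List Bool × List Bool)} (hT : Represents g T) (hR : Reduced T)
    {u1 z : List Bool} (hz : z ≠ []) (h1 : (u1, false :: z) ∈ T) :
    ∃ T', Represents (g.trans x0⁻¹) T' ∧ Reduced T' ∧
      (u1, false :: false :: z) ∈ T' ∧
      T.card ≤ T'.card ∧
      ((∃ p ∈ T, p.2 = [true]) → T'.card = T.card + 1 ∧ (∃ p' ∈ T', p'.2 = [true])) ∧
      (∀ p' ∈ T', ∀ s : List Bool, p'.2 = true :: s →
        p'.2 = [true] ∨ ∃ p ∈ T, (∃ s', p.2 = true :: s') ∧ p.2.length = p'.2.length + 1) := by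
  classical
  have hne : ∀ p ∈ T, p.2 ≠ [] := by
    intro p hp hnil
    have := rng_antichain hT hp h1 (by rw [hnil]; exact List.nil_prefix)
    rw [this] at hnil
    simp at hnil
  have hne0 : ∀ p ∈ T, p.2 ≠ [false] := by
    intro p hp hf
    have := rng_antichain hT hp h1 (by rw [hf]; exact ⟨z, rfl⟩)
    rw [this] at hf
    simp only at hf
    exact hz (by simpa using hf)
  by_cases hsplit : ∃ p ∈ T, p.2 = [true]
  · -- split case
    obtain ⟨q, hqT, hq2⟩ := hsplit
    set u := q.1 with hu
    have hqu : (u, [true]) ∈ T := by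
      rw [hu, ← hq2, Prod.mk.eta]
      exact hqT
    have hTpre := split_represents hT hqu
    set Tp := insert (u ++ [false], [true] ++ [false])
      (insert (u ++ [true], [true] ++ [true]) (T.erase (u, [true]))) with hTpdef
    have hmemTp : ∀ x, x ∈ Tp ↔ x = (u ++ [false], [true, false]) ∨
        x = (u ++ [true], [true, true]) ∨ (x ∈ T ∧ x ≠ (u, [true])) := by
      intro x
      simp [hTpdef, Finset.mem_insert, Finset.mem_erase, and_comm]
    have hlp : ∀ p ∈ Tp, 2 ≤ p.2.length := by
      intro p hp
      rcases (hmemTp p).mp hp with rfl | rfl | ⟨hpT, hpne⟩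
      · simp
      · simp
      · rcases p with ⟨d, v⟩
        rcases v with _ | ⟨x, v⟩
        · exact absurd rfl (hne _ hpT)
        rcases v with _ | ⟨y, v⟩
        · cases x
          · exact absurd rfl (hne0 _ hpT)
          · exfalso
            have := rng_antichain hT hpT hqu (by simp)
            exact hpne this
        · simp
    refine ⟨Tp.image (fun p => (p.1, phi p.2)), ?_, ?_, ?_, ?_, ?_, ?_⟩
    · exact image_represents hTpre phi (fun p hp ω => x0inv_phi hx0 (hlp p hp) ω)
    · apply core_phi_reduced hlp
      intro a C m0 m1 hC
      rcases (hmemTp _).mp m0 with he | he | ⟨m0T, -⟩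
      · have h2 := (Prod.mk.inj he).2
        have := (snoc_inj (show C ++ [false] = [true] ++ [false] from h2)).1
        exact hC (by rw [this])
      · have h2 := (Prod.mk.inj he).1
        exact snoc_ne (by simp) h2
      · rcases (hmemTp _).mp m1 with he | he | ⟨m1T, -⟩
        · have h2 := (Prod.mk.inj he).1
          exact snoc_ne (by simp) h2
        · have h2 := (Prod.mk.inj he).2
          have := (snoc_inj (show C ++ [true] = [true] ++ [true] from h2)).1
          exact hC (by rw [this])
        · exact hR a C ⟨m0T, m1T⟩
    · have hmem1 : (u1, false :: z) ∈ Tp := by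
        rw [hmemTp]
        refine Or.inr (Or.inr ⟨h1, ?_⟩)
        intro he
        have := (Prod.mk.inj he).2
        simp at this
      have : (u1, phi (false :: z)) ∈ Tp.image (fun p => (p.1, phi p.2)) :=
        Finset.mem_image_of_mem _ hmem1
      rwa [phi_f] at this
    · -- card ≥
      have hcard : Tp.card = T.card + 1 := by
        have hAB : (u ++ [false], ([true] : List Bool) ++ [false]) ≠
            (u ++ [true], [true] ++ [true]) := by
          intro he
          exact snoc_ne (by simp) (Prod.mk.inj he).1
        have hAT : ∀ c : Bool, (u ++ [c], ([true] : List Bool) ++ [c]) ∉ T := by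
          intro c hc
          have := dom_antichain hT hqu hc ⟨[c], rfl⟩
          have h2 := congrArg (fun y => (y : List Bool × List Bool).1.length) this
          simp at h2
        have hA1 : (u ++ [false], ([true] : List Bool) ++ [false]) ∉
            insert (u ++ [true], [true] ++ [true]) (T.erase (u, [true])) := by
          simp only [Finset.mem_insert, Finset.mem_erase]
          rintro (he | ⟨-, he⟩)
          · exact hAB he
          · exact hAT false he
        have hA2 : (u ++ [true], ([true] : List Bool) ++ [true]) ∉ T.erase (u, [true]) := by
          simp only [Finset.mem_erase]
          rintro ⟨-, he⟩
          exact hAT true he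
        rw [hTpdef, Finset.card_insert_of_notMem hA1, Finset.card_insert_of_notMem hA2,
          Finset.card_erase_of_mem hqu]
        have : 1 ≤ T.card := Finset.card_pos.mpr ⟨_, h1⟩
        omega
      rw [card_image_psi hTpre, hcard]
      omega
    · intro _hsp
      constructor
      · rw [card_image_psi hTpre]
        have hAB : (u ++ [false], ([true] : List Bool) ++ [false]) ≠
            (u ++ [true], [true] ++ [true]) := by
          intro he
          exact snoc_ne (by simp) (Prod.mk.inj he).1
        have hAT : ∀ c : Bool, (u ++ [c], ([true] : List Bool) ++ [c]) ∉ T := by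
          intro c hc
          have := dom_antichain hT hqu hc ⟨[c], rfl⟩
          have h2 := congrArg (fun y => (y : List Bool × List Bool).1.length) this
          simp at h2
        have hA1 : (u ++ [false], ([true] : List Bool) ++ [false]) ∉
            insert (u ++ [true], [true] ++ [true]) (T.erase (u, [true])) := by
          simp only [Finset.mem_insert, Finset.mem_erase]
          rintro (he | ⟨-, he⟩)
          · exact hAB he
          · exact hAT false he
        have hA2 : (u ++ [true], ([true] : List Bool) ++ [true]) ∉ T.erase (u, [true]) := by
          simp only [Finset.mem_erase]
          rintro ⟨-, he⟩
          exact hAT true he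
        rw [hTpdef, Finset.card_insert_of_notMem hA1, Finset.card_insert_of_notMem hA2,
          Finset.card_erase_of_mem hqu]
        have : 1 ≤ T.card := Finset.card_pos.mpr ⟨_, h1⟩
        omega
      · have hmem : (u ++ [true], ([true] : List Bool) ++ [true]) ∈ Tp := by
          rw [hmemTp]
          exact Or.inr (Or.inl rfl)
        exact ⟨_, Finset.mem_image_of_mem _ hmem, rfl⟩
    · intro p' hp' s hps
      obtain ⟨p, hp, rfl⟩ := Finset.mem_image.mp hp'
      simp only at hps ⊢
      rcases (hmemTp p).mp hp with rfl | rfl | ⟨hpT, hpne⟩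
      · simp only at hps
        exact absurd hps (by simp)
      · simp only at hps ⊢
        left
        rfl
      · rcases p with ⟨d, v⟩
        simp only at hps ⊢
        have hlv : 2 ≤ v.length := hlp (d, v) hp
        rcases v with _ | ⟨x, v⟩
        · simp at hlv
        rcases v with _ | ⟨y, v⟩
        · simp at hlv
        cases x
        · rw [phi_f] at hps
          simp at hps
        · cases y
          · rw [phi_tf] at hps
            simp at hps
          · rw [phi_tt] at hps
            right
            exact ⟨(d, true :: true :: v), hpT, ⟨true :: v, rfl⟩, by simp⟩
  · -- no split
    have hl : ∀ p ∈ T, 2 ≤ p.2.length := by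
      intro p hp
      rcases p with ⟨d, v⟩
      rcases v with _ | ⟨x, v⟩
      · exact absurd rfl (hne _ hp)
      rcases v with _ | ⟨y, v⟩
      · cases x
        · exact absurd rfl (hne0 _ hp)
        · exact absurd ⟨_, hp, rfl⟩ hsplit
      · simp
    refine ⟨T.image (fun p => (p.1, phi p.2)), ?_, ?_, ?_, ?_, ?_, ?_⟩
    · exact image_represents hT phi (fun p hp ω => x0inv_phi hx0 (hl p hp) ω)
    · exact core_phi_reduced hl (fun a C m0 m1 _ => hR a C ⟨m0, m1⟩)
    · have : (u1, phi (false :: z)) ∈ T.image (fun p => (p.1, phi p.2)) :=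
        Finset.mem_image_of_mem _ h1
      rwa [phi_f] at this
    · rw [card_image_psi hT]
    · intro h
      exact absurd h hsplit
    · intro p' hp' s hps
      obtain ⟨p, hp, rfl⟩ := Finset.mem_image.mp hp'
      rcases p with ⟨d, v⟩
      simp only at hps ⊢
      have hlv : 2 ≤ v.length := hl (d, v) hp
      rcases v with _ | ⟨x, v⟩
      · simp at hlv
      rcases v with _ | ⟨y, v⟩
      · simp at hlv
      cases x
      · rw [phi_f] at hps
        simp at hps
      · cases y
        · rw [phi_tf] at hps
          simp at hps
        · rw [phi_tt] at hps
          right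
          exact ⟨(d, true :: true :: v), hp, ⟨true :: v, rfl⟩, by simp⟩

lemma step2 {g x1 : VPerm} (hx1 : Represents x1 x1T)
    {T : Finset (List Bool × List Bool)} (hT : Represents g T) (hR : Reduced T)
    {u u1 z : List Bool} (hz : z ≠ []) (h1 : (u1, false :: z) ∈ T)
    (hq : (u, [true]) ∈ T)
    (hsh : ∀ p ∈ T, p.2 = [true] ∨ ∃ s, p.2 = false :: s) :
    ∃ T', Represents (g.trans x1) T' ∧ Reduced T' ∧
      (∀ p ∈ T', 2 ≤ p.2.length) ∧
      (u1, false :: z) ∈ T' ∧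
      T'.card = T.card + 2 := by
  classical
  have hne : ∀ p ∈ T, p.2 ≠ [] := by
    intro p hp hnil
    have := rng_antichain hT hp h1 (by rw [hnil]; exact List.nil_prefix)
    rw [this] at hnil
    simp at hnil
  have hne0 : ∀ p ∈ T, p.2 ≠ [false] := by
    intro p hp hf
    have := rng_antichain hT hp h1 (by rw [hf]; exact ⟨z, rfl⟩)
    rw [this] at hf
    simp only at hf
    exact hz (by simpa using hf)
  have hnet : ∀ p ∈ T, p ≠ (u, [true]) → p.2 ≠ [true] := by
    intro p hp hpne ht
    exact hpne (rng_antichain hT hp hq (by rw [ht]))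
  have hT1 : Represents g (insert (u ++ [false], [true] ++ [false])
      (insert (u ++ [true], [true] ++ [true]) (T.erase (u, [true])))) :=
    split_represents hT hq
  set Tp1 := insert (u ++ [false], [true] ++ [false])
      (insert (u ++ [true], [true] ++ [true]) (T.erase (u, [true]))) with hTp1def
  have hA1 : (u ++ [false], [true] ++ [false]) ∈ Tp1 := Finset.mem_insert_self _ _
  have hT2 : Represents g (insert ((u ++ [false]) ++ [false], ([true] ++ [false]) ++ [false])
      (insert ((u ++ [false]) ++ [true], ([true] ++ [false]) ++ [true])
        (Tp1.erase (u ++ [false], [true] ++ [false])))) :=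
    split_represents hT1 hA1
  set Tp2 := insert ((u ++ [false]) ++ [false], ([true] ++ [false]) ++ [false])
      (insert ((u ++ [false]) ++ [true], ([true] ++ [false]) ++ [true])
        (Tp1.erase (u ++ [false], [true] ++ [false]))) with hTp2def
  have hdomT : ∀ c : List Bool, c ≠ [] → ∀ q' ∈ T, q'.1 = u ++ c → False := by
    intro c hc q' hq' he
    have := dom_antichain hT hq hq' (by rw [he]; exact ⟨c, rfl⟩)
    rw [← this] at he
    simp only at he
    have h3 := congrArg List.length he
    simp at h3
    exact hc h3
  have hmemTp2 : ∀ x, x ∈ Tp2 ↔ x = (u ++ [false, false], [true, false, false]) ∨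
      x = (u ++ [false, true], [true, false, true]) ∨
      x = (u ++ [true], [true, true]) ∨ (x ∈ T ∧ x ≠ (u, [true])) := by
    intro x
    rw [hTp2def]
    simp only [Finset.mem_insert, Finset.mem_erase, hTp1def, List.append_assoc]
    constructor
    · rintro (rfl | rfl | ⟨hne1, (rfl | rfl | ⟨hne2, hxT⟩)⟩)
      · left; rfl
      · right; left; rfl
      · exact absurd rfl hne1
      · right; right; left; rfl
      · exact Or.inr (Or.inr (Or.inr ⟨hxT, hne2⟩))
    · rintro (rfl | rfl | rfl | ⟨hxT, hxne⟩)
      · left; rfl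
      · right; left; rfl
      · right; right
        constructor
        · intro he
          exact absurd (snoc_inj (Prod.mk.inj he).1).2 (by simp)
        · right; left; rfl
      · right; right
        constructor
        · intro he
          exact hdomT [false] (by simp) x hxT (Prod.mk.inj he).1
        · right; right
          exact ⟨hxne, hxT⟩
  have hl2 : ∀ p ∈ Tp2, 2 ≤ p.2.length := by
    intro p hp
    rcases (hmemTp2 p).mp hp with rfl | rfl | rfl | ⟨hpT, hpne⟩
    · simp
    · simp
    · simp
    · rcases hsh p hpT with ht | ⟨s, hs⟩
      · exact absurd ht (hnet p hpT hpne)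
      · rcases p with ⟨d, v⟩
        simp only at hs
        subst hs
        rcases s with _ | ⟨y, s⟩
        · exact absurd rfl (hne0 _ hpT)
        · simp
  have hxival : ∀ p ∈ Tp2, ∀ ω : CSeq, x1 (app p.2 ω) = app (xi p.2) ω := by
    intro p hp ω
    rcases (hmemTp2 p).mp hp with rfl | rfl | rfl | ⟨hpT, hpne⟩
    · exact x1_xi_tff hx1 ω
    · exact x1_xi_tft hx1 ω
    · exact x1_xi_tt hx1 ω
    · rcases hsh p hpT with ht | ⟨s, hs⟩
      · exact absurd ht (hnet p hpT hpne)
      · rw [hs]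
        exact x1_xi_f hx1 s ω
  have hT2' : Represents g Tp2 := hT2
  have hcard1 : Tp1.card = T.card + 1 := by
    have hAT : ∀ c : Bool, (u ++ [c], ([true] : List Bool) ++ [c]) ∉ T := by
      intro c hc
      exact hdomT [c] (by simp) _ hc rfl
    have hA1' : (u ++ [false], ([true] : List Bool) ++ [false]) ∉
        insert (u ++ [true], [true] ++ [true]) (T.erase (u, [true])) := by
      simp only [Finset.mem_insert, Finset.mem_erase]
      rintro (he | ⟨-, he⟩)
      · exact snoc_ne (by simp) (Prod.mk.inj he).1
      · exact hAT false he
    have hA2' : (u ++ [true], ([true] : List Bool) ++ [true]) ∉ T.erase (u, [true]) := by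
      simp only [Finset.mem_erase]
      rintro ⟨-, he⟩
      exact hAT true he
    rw [hTp1def, Finset.card_insert_of_notMem hA1', Finset.card_insert_of_notMem hA2',
      Finset.card_erase_of_mem hq]
    have : 1 ≤ T.card := Finset.card_pos.mpr ⟨_, h1⟩
    omega
  have hcard2 : Tp2.card = T.card + 2 := by
    have hnotin : ∀ c : Bool,
        ((u ++ [false]) ++ [c], (([true] : List Bool) ++ [false]) ++ [c]) ∉
          Tp1.erase (u ++ [false], [true] ++ [false]) := by
      intro c hc
      rw [Finset.mem_erase, hTp1def] at hc
      obtain ⟨-, hc⟩ := hc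
      simp only [Finset.mem_insert, Finset.mem_erase] at hc
      rcases hc with he | he | ⟨-, he⟩
      · have h2 := (Prod.mk.inj he).1
        have := congrArg List.length h2
        simp at this
      · have h2 := (Prod.mk.inj he).1
        have := congrArg List.length (snoc_inj h2).1
        simp at this
      · exact hdomT [false, c] (by simp) _ he (by simp)
    have hB2 : ((u ++ [false]) ++ [false], (([true] : List Bool) ++ [false]) ++ [false]) ∉
        insert ((u ++ [false]) ++ [true], ([true] ++ [false]) ++ [true])
          (Tp1.erase (u ++ [false], [true] ++ [false])) := by
      simp only [Finset.mem_insert]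
      rintro (he | he)
      · exact snoc_ne (by simp) (Prod.mk.inj he).1
      · exact hnotin false (by simpa using he)
    have hpos : 1 ≤ Tp1.card := Finset.card_pos.mpr ⟨_, hA1⟩
    rw [hTp2def, Finset.card_insert_of_notMem hB2,
      Finset.card_insert_of_notMem (hnotin true), Finset.card_erase_of_mem hA1, hcard1]
    omega
  refine ⟨Tp2.image (fun p => (p.1, xi p.2)), ?_, ?_, ?_, ?_, ?_⟩
  · exact image_represents hT2' xi hxival
  · apply core_xi_reduced (u := u)
    · intro p hp
      rcases (hmemTp2 p).mp hp with rfl | rfl | rfl | ⟨hpT, hpne⟩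
      · right; left; rfl
      · right; right; left; rfl
      · right; right; right; rfl
      · left
        rcases hsh p hpT with ht | ⟨s, hs⟩
        · exact absurd ht (hnet p hpT hpne)
        · exact ⟨s, hs, hl2 p hp⟩
    · intro a C m0 m1
      have hgetT : ∀ (c : Bool) (b : List Bool),
          (b, (false :: C) ++ [c]) ∈ Tp2 → (b, (false :: C) ++ [c]) ∈ T := by
        intro c b hm
        rcases (hmemTp2 _).mp hm with he | he | he | ⟨hmT, -⟩
        · have h2 := (Prod.mk.inj he).2
          simp at h2
        · have h2 := (Prod.mk.inj he).2
          simp at h2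
        · have h2 := (Prod.mk.inj he).2
          simp at h2
        · exact hmT
      exact hR a (false :: C) ⟨hgetT false _ m0, hgetT true _ m1⟩
  · intro p' hp'
    obtain ⟨p, hp, rfl⟩ := Finset.mem_image.mp hp'
    rcases (hmemTp2 p).mp hp with rfl | rfl | rfl | ⟨hpT, hpne⟩
    · simp only
      decide
    · simp only
      decide
    · simp only
      decide
    · rcases hsh p hpT with ht | ⟨s, hs⟩
      · exact absurd ht (hnet p hpT hpne)
      · simp only
        rw [hs, xi_f, ← hs]
        exact hl2 p hp
  · have hmem : (u1, false :: z) ∈ Tp2 := by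
      rw [hmemTp2]
      refine Or.inr (Or.inr (Or.inr ⟨h1, ?_⟩))
      intro he
      have := (Prod.mk.inj he).2
      simp at this
    have : (u1, xi (false :: z)) ∈ Tp2.image (fun p => (p.1, xi p.2)) :=
      Finset.mem_image_of_mem _ hmem
    rwa [xi_f] at this
  · rw [card_image_psi hT2' xi, hcard2]

-- chunk 9 : main theorem assembly

lemma Nbr_eq {g : VPerm} {T : Finset (List Bool × List Bool)}
    (hT : Represents g T) (hR : Reduced T) : Nbr g = T.card := by
  unfold Nbr
  exact nbr_eq hT hR

lemma trans_pow_zero (g x : VPerm) : g.trans (x ^ 0) = g := by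
  ext ω
  simp

lemma trans_pow_succ (g x : VPerm) (i : ℕ) :
    g.trans (x ^ (i + 1)) = (g.trans (x ^ i)).trans x := by
  ext ω
  simp only [Equiv.trans_apply]
  rw [pow_succ']
  rfl

lemma ones_replicate {r : List Bool} (h : IsPref r (fun _ => true)) :
    r = List.replicate r.length true := by
  rw [isPref_iff] at h
  apply List.ext_getElem (by simp)
  intro i h1 h2
  rw [← h i h1]
  simp

/-- Let `g1 ∈ V` with `N(g1) ≥ 4` such that `0` is a strict
prefix of the range code of some branch of `g1`.  Let `M ≥ 1`,
`n = M·N(g1)` and `w2 = x0^{−n}·x1·x0^{n}` (left-to-right products).  Then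
(1) `N(g1·w') ≥ N(g1)` for every prefix `w'` of `w2`, and
(2) `N(g1·w2) ≥ M·N(g1)`. -/
theorem stmt11 (x0 x1 : VPerm)
    (hx0 : Represents x0 x0T) (hx1 : Represents x1 x1T)
    (g1 : VPerm) (hg1 : InV g1) (hN : 4 ≤ Nbr g1)
    (hpref : StrictPrefOfBranch g1 [false])
    (M n : ℕ) (hM : 1 ≤ M) (hn : n = M * Nbr g1) :
    (∀ i : ℕ, i ≤ n → Nbr g1 ≤ Nbr (g1.trans (x0⁻¹ ^ i))) ∧
    (∀ i : ℕ, i ≤ n →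
      Nbr g1 ≤ Nbr (((g1.trans (x0⁻¹ ^ n)).trans x1).trans (x0 ^ i))) ∧
    M * Nbr g1 ≤ Nbr (((g1.trans (x0⁻¹ ^ n)).trans x1).trans (x0 ^ n)) := by
  classical
  obtain ⟨uu, vv, ⟨T0, hT0, hR0, hmem0⟩, hvpref, hvne⟩ := hpref
  obtain ⟨w, rfl⟩ := hvpref
  have hw : w ≠ [] := by
    rintro rfl
    exact hvne (by simp)
  have hmem0' : (uu, false :: w) ∈ T0 := hmem0
  set N := Nbr g1 with hNdef
  have hNcard : T0.card = N := (Nbr_eq hT0 hR0).symm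
  have hN4 : 4 ≤ N := hN
  have hnN : N ≤ n := by
    rw [hn]
    calc N = 1 * N := (one_mul N).symm
    _ ≤ M * N := Nat.mul_le_mul_right N hM
  -- Phase 1 invariant
  have Inv1 : ∀ i : ℕ, ∃ T, Represents (g1.trans (x0⁻¹ ^ i)) T ∧ Reduced T ∧
      (∃ u', (u', List.replicate (i + 1) false ++ w) ∈ T) ∧
      (∀ p ∈ T, ∀ s : List Bool, p.2 = true :: s → p.2.length ≤ max (N - 1 - i) 1) ∧
      N + i ≤ T.card + min i (N - 2) := by
    intro i
    induction i with
    | zero =>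
        refine ⟨T0, ?_, hR0, ⟨uu, ?_⟩, ?_, ?_⟩
        · rw [trans_pow_zero]; exact hT0
        · simpa using hmem0'
        · intro p hp s hps
          have := range_length_lt hT0 (u := p.1) (v := p.2)
            (by rw [Prod.mk.eta]; exact hp)
          rw [hNcard] at this
          omega
        · simp [hNcard]
    | succ i ih =>
        obtain ⟨T, hT, hR, ⟨u', hu'⟩, hLen, hCard⟩ := ih
        have hz : (List.replicate i false ++ w) ≠ [] := by
          simp [hw]
        have hu'' : (u', false :: (List.replicate i false ++ w)) ∈ T := by
          rwa [rep_succ1] at hu'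
        obtain ⟨T', hT', hR', hb', hcle, hsplitcl, hlen'⟩ := step1 hx0 hT hR hz hu''
        refine ⟨T', ?_, hR', ⟨u', ?_⟩, ?_, ?_⟩
        · rw [trans_pow_succ]; exact hT'
        · rw [rep_succ2]; exact hb'
        · -- length invariant transfer
          intro p hp s hps
          rcases hlen' p hp s hps with h1 | ⟨p0, hp0, ⟨s', hs'⟩, hlenrel⟩
          · rw [h1]; simp
          · have := hLen p0 hp0 s' hs'
            have hplen : 1 ≤ p.2.length := by rw [hps]; simp
            omega
        · -- cardinality invariant
          by_cases hcase : N - 2 ≤ i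
          · -- guaranteed split
            have honesr : ∃ p ∈ T, p.2 = [true] := by
              obtain ⟨p, hp, hppref⟩ := (hT.2.1 (fun _ => true)).exists
              have hrep := ones_replicate hppref
              have hne : p.2 ≠ [] := by
                intro hnil
                have := rng_antichain hT hp hu'
                  (by rw [hnil]; exact List.nil_prefix)
                rw [this] at hnil
                simp [hw] at hnil
              rcases hlp : p.2 with _ | ⟨b, s⟩
              · exact absurd hlp hne
              · have hb : b = true := by
                  rw [hlp] at hrep
                  simp only [List.length_cons, List.replicate_succ,
                    List.cons.injEq] at hrep
                  exact hrep.1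
                subst hb
                have := hLen p hp s hlp
                have hmax : max (N - 1 - i) 1 = 1 := by omega
                rw [hmax, hlp] at this
                simp at this
                exact ⟨p, hp, by rw [hlp, this]⟩
            obtain ⟨hceq, -⟩ := hsplitcl honesr
            have : min i (N - 2) = N - 2 := by omega
            have h2 : min (i + 1) (N - 2) = N - 2 := by omega
            omega
          · have : min i (N - 2) = i := by omega
            have h2 : min (i + 1) (N - 2) = i + 1 := by omega
            omega
  -- claim 1
  have claim1 : ∀ i : ℕ, N ≤ Nbr (g1.trans (x0⁻¹ ^ i)) := by
    intro i
    obtain ⟨T, hT, hR, -, -, hCard⟩ := Inv1 i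
    rw [Nbr_eq hT hR]
    have : min i (N - 2) ≤ i := Nat.min_le_left _ _
    omega
  -- phase 2
  obtain ⟨Tn, hTn, hRn, ⟨un, hun⟩, hLenn, hCardn⟩ := Inv1 n
  have hznn : (List.replicate n false ++ w) ≠ [] := by simp [hw]
  have hunn : (un, false :: (List.replicate n false ++ w)) ∈ Tn := by
    rwa [rep_succ1] at hun
  have hmaxn : max (N - 1 - n) 1 = 1 := by omega
  have honesn : ∃ p ∈ Tn, p.2 = [true] := by
    obtain ⟨p, hp, hppref⟩ := (hTn.2.1 (fun _ => true)).exists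
    have hrep := ones_replicate hppref
    have hne : p.2 ≠ [] := by
      intro hnil
      have := rng_antichain hTn hp hun (by rw [hnil]; exact List.nil_prefix)
      rw [this] at hnil
      simp [hw] at hnil
    rcases hlp : p.2 with _ | ⟨b, s⟩
    · exact absurd hlp hne
    · have hb : b = true := by
        rw [hlp] at hrep
        simp only [List.length_cons, List.replicate_succ, List.cons.injEq] at hrep
        exact hrep.1
      subst hb
      have := hLenn p hp s hlp
      rw [hmaxn, hlp] at this
      simp at this
      exact ⟨p, hp, by rw [hlp, this]⟩
  obtain ⟨q, hqTn, hq2⟩ := honesn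
  have hqmem : (q.1, [true]) ∈ Tn := by rw [← hq2, Prod.mk.eta]; exact hqTn
  have hshn : ∀ p ∈ Tn, p.2 = [true] ∨ ∃ s, p.2 = false :: s := by
    intro p hp
    have hne : p.2 ≠ [] := by
      intro hnil
      have := rng_antichain hTn hp hun (by rw [hnil]; exact List.nil_prefix)
      rw [this] at hnil
      simp [hw] at hnil
    rcases hlp : p.2 with _ | ⟨b, s⟩
    · exact absurd hlp hne
    · cases b
      · exact Or.inr ⟨s, rfl⟩
      · left
        have := hLenn p hp s hlp
        rw [hmaxn, hlp] at this
        simp at this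
        rw [this]
  obtain ⟨T2, hT2, hR2, hl2, hb2, hc2⟩ := step2 hx1 hTn hRn hznn hunn hqmem hshn
  have hcTn : n + 2 ≤ Tn.card := by
    have : min n (N - 2) = N - 2 := by omega
    omega
  -- phase 3 invariant
  have Inv3 : ∀ j : ℕ, j ≤ n →
      ∃ T, Represents ((((g1.trans (x0⁻¹ ^ n)).trans x1)).trans (x0 ^ j)) T ∧
      Reduced T ∧ (∀ p ∈ T, 2 ≤ p.2.length) ∧
      (∃ u', (u', List.replicate (n + 1 - j) false ++ w) ∈ T) ∧
      T.card = T2.card := by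
    intro j
    induction j with
    | zero =>
        intro _
        refine ⟨T2, ?_, hR2, hl2, ⟨un, ?_⟩, rfl⟩
        · rw [trans_pow_zero]; exact hT2
        · rw [Nat.sub_zero, rep_succ1]; exact hb2
    | succ j ih =>
        intro hj
        obtain ⟨T, hT, hR, hl, ⟨u', hu'⟩, hcard⟩ := ih (by omega)
        have hk : n + 1 - j = (n - 1 - j) + 2 := by omega
        rw [hk] at hu'
        obtain ⟨T', hT', hR', hl', hb', hc'⟩ := step3 hx0 hT hR hl hw hu'
        refine ⟨T', ?_, hR', hl', ⟨u', ?_⟩, by omega⟩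
        · rw [trans_pow_succ]; exact hT'
        · have : n + 1 - (j + 1) = (n - 1 - j) + 1 := by omega
          rw [this]; exact hb'
  refine ⟨?_, ?_, ?_⟩
  · intro i _
    exact claim1 i
  · intro i hi
    obtain ⟨T, hT, hR, -, -, hcard⟩ := Inv3 i hi
    rw [Nbr_eq hT hR, hcard, hc2]
    omega
  · obtain ⟨T, hT, hR, -, -, hcard⟩ := Inv3 n le_rfl
    rw [Nbr_eq hT hR, hcard, hc2, ← hn]
    omega
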